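/- arXiv:1607.05560 — 4 statements merged into one kernel-verified Lean document; each statement's English description precedes it below -/
import Mathlib

section
/- For any two N×N Hermitian matrices A and B, the supremum norm of the difference of the cumulative distribution functions of their empirical spectral measures is at most rank(A−B)/N. -/
/-!
Fix `x` and let `V` be the span of the eigenvectors of `A` with eigenvalue `≤ x`, `U` the span of
the eigenvectors of `B` with eigenvalue `> x`, and `K = ker (A - B)`, of codimension `rank (A - B)`.
On `V ⊓ K` the quadratic forms of `A` and `B` agree and are `≤ x ‖v‖²`, while on `U \ {0}` that of
`B` is `> x ‖v‖²`; hence `V ⊓ K` and `U` are disjoint, and counting dimensions gives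
`#{λᵢ(A) ≤ x} - rank (A - B) + #{λᵢ(B) > x} ≤ N`. The same holds with `A` and `B` swapped.
-/

open Matrix Finset Module

/-- Empirical spectral CDF of a Hermitian matrix. -/
noncomputable def espCDF {N : ℕ} {A : Matrix (Fin N) (Fin N) ℂ}
    (hA : A.IsHermitian) (x : ℝ) : ℝ :=
  ((Finset.univ.filter fun i => hA.eigenvalues i ≤ x).card : ℝ) / N

namespace OrthonormalBasis

variable {ι 𝕜 E : Type*} [Fintype ι] [RCLike 𝕜] [NormedAddCommGroup E] [InnerProductSpace 𝕜 E]

lemma repr_eq_zero_of_mem_span_image (b : OrthonormalBasis ι 𝕜 E) {s : Set ι} {v : E}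
    (hv : v ∈ Submodule.span 𝕜 (b '' s)) {i : ι} (hi : i ∉ s) : b.repr v i = 0 := by
  rw [← b.coe_toBasis] at hv
  rw [← b.coe_toBasis_repr_apply, ← Finsupp.notMem_support_iff]
  exact fun h => hi (b.toBasis.repr_support_subset_of_mem_span s hv h)

lemma finrank_span_image (b : OrthonormalBasis ι 𝕜 E) (s : Finset ι) :
    finrank 𝕜 (Submodule.span 𝕜 (b '' s)) = #s := by
  have hb : LinearIndependent 𝕜 (fun i : (s : Set ι) => b i) :=
    b.orthonormal.linearIndependent.comp _ Subtype.val_injective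
  rw [Set.image_eq_range, finrank_span_eq_card hb]
  simp

lemma sum_sq_norm_repr (b : OrthonormalBasis ι 𝕜 E) (v : E) :
    ∑ i, ‖b.repr v i‖ ^ 2 = ‖v‖ ^ 2 := by
  simp_rw [b.repr_apply_apply, b.sum_sq_norm_inner_right]

end OrthonormalBasis

namespace Matrix

lemma rank_sub_comm {R m n : Type*} [CommRing R] [Fintype n] (A B : Matrix m n R) :
    (A - B).rank = (B - A).rank := by
  rw [← neg_sub]
  simpa using
    (B - A).rank_smul_of_mem_nonZeroDivisors (c := -1) isUnit_one.neg.mem_nonZeroDivisors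

variable {𝕜 n : Type*} [RCLike 𝕜] [Fintype n] [DecidableEq n]

lemma finrank_ker_toEuclideanLin_add_rank (M : Matrix n n 𝕜) :
    finrank 𝕜 (LinearMap.ker (toEuclideanLin M)) + M.rank = Fintype.card n := by
  rw [M.rank_eq_finrank_range_toLin (PiLp.basisFun 2 𝕜 n) (PiLp.basisFun 2 𝕜 n),
    ← toLpLin_eq_toLin, add_comm, LinearMap.finrank_range_add_finrank_ker,
    finrank_euclideanSpace]

namespace IsHermitian

variable {A B : Matrix n n 𝕜}

lemma toEuclideanLin_eigenvectorBasis (hA : A.IsHermitian) (i : n) :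
    toEuclideanLin A (hA.eigenvectorBasis i) = hA.eigenvalues i • hA.eigenvectorBasis i := by
  rw [toLpLin_apply, hA.mulVec_eigenvectorBasis]
  rfl

lemma eigenvectorBasis_repr_toEuclideanLin (hA : A.IsHermitian) (v : EuclideanSpace 𝕜 n) (i : n) :
    hA.eigenvectorBasis.repr (toEuclideanLin A v) i
      = hA.eigenvalues i * hA.eigenvectorBasis.repr v i := by
  rw [OrthonormalBasis.repr_apply_apply, OrthonormalBasis.repr_apply_apply,
    ← isSymmetric_toEuclideanLin_iff.mpr hA, toEuclideanLin_eigenvectorBasis,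
    RCLike.real_smul_eq_coe_smul (K := 𝕜), inner_smul_left, RCLike.conj_ofReal]

lemma re_inner_toEuclideanLin (hA : A.IsHermitian) (v : EuclideanSpace 𝕜 n) :
    RCLike.re (inner 𝕜 v (toEuclideanLin A v))
      = ∑ i, hA.eigenvalues i * ‖hA.eigenvectorBasis.repr v i‖ ^ 2 := by
  rw [← hA.eigenvectorBasis.repr.inner_map_map, PiLp.inner_apply, map_sum]
  refine Finset.sum_congr rfl fun i _ => ?_
  rw [eigenvectorBasis_repr_toEuclideanLin, RCLike.inner_apply, mul_assoc, RCLike.mul_conj]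
  norm_cast

lemma re_inner_toEuclideanLin_le_of_mem_span (hA : A.IsHermitian) {s : Set n} {x : ℝ}
    (hs : ∀ i ∈ s, hA.eigenvalues i ≤ x) {v : EuclideanSpace 𝕜 n}
    (hv : v ∈ Submodule.span 𝕜 (hA.eigenvectorBasis '' s)) :
    RCLike.re (inner 𝕜 v (toEuclideanLin A v)) ≤ x * ‖v‖ ^ 2 := by
  rw [re_inner_toEuclideanLin, ← hA.eigenvectorBasis.sum_sq_norm_repr, Finset.mul_sum]
  refine Finset.sum_le_sum fun i _ => ?_
  by_cases hi : i ∈ s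
  · exact mul_le_mul_of_nonneg_right (hs i hi) (sq_nonneg _)
  · simp [hA.eigenvectorBasis.repr_eq_zero_of_mem_span_image hv hi]

lemma lt_re_inner_toEuclideanLin_of_mem_span (hA : A.IsHermitian) {s : Set n} {x : ℝ}
    (hs : ∀ i ∈ s, x < hA.eigenvalues i) {v : EuclideanSpace 𝕜 n}
    (hv : v ∈ Submodule.span 𝕜 (hA.eigenvectorBasis '' s)) (hv0 : v ≠ 0) :
    x * ‖v‖ ^ 2 < RCLike.re (inner 𝕜 v (toEuclideanLin A v)) := by
  have hzero {i} (hi : i ∉ s) := hA.eigenvectorBasis.repr_eq_zero_of_mem_span_image hv hi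
  obtain ⟨j, hj⟩ : ∃ j, hA.eigenvectorBasis.repr v j ≠ 0 := by
    by_contra! h
    exact hv0 (hA.eigenvectorBasis.repr.injective (by ext j; simp [h j]))
  have hjs : j ∈ s := by_contra fun hjs => hj (hzero hjs)
  rw [re_inner_toEuclideanLin, ← hA.eigenvectorBasis.sum_sq_norm_repr, Finset.mul_sum]
  refine Finset.sum_lt_sum (fun i _ => ?_) ⟨j, mem_univ j, ?_⟩
  · by_cases hi : i ∈ s
    · exact mul_le_mul_of_nonneg_right (hs i hi).le (sq_nonneg _)
    · simp [hzero hi]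
  · exact mul_lt_mul_of_pos_right (hs j hjs) (by positivity)

theorem card_eigenvalues_le_le_add_rank (hA : A.IsHermitian) (hB : B.IsHermitian) (x : ℝ) :
    #{i | hA.eigenvalues i ≤ x} ≤ #{i | hB.eigenvalues i ≤ x} + (A - B).rank := by
  set V := Submodule.span 𝕜 (hA.eigenvectorBasis '' ↑({i | hA.eigenvalues i ≤ x} : Finset n))
  set U := Submodule.span 𝕜 (hB.eigenvectorBasis '' ↑({i | ¬hB.eigenvalues i ≤ x} : Finset n))
  set K := LinearMap.ker (toEuclideanLin (A - B))
  have hdisj : Disjoint (V ⊓ K) U := by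
    rw [Submodule.disjoint_def]
    rintro v ⟨hvV, hvK⟩ hvU
    by_contra hv0
    have hAB : toEuclideanLin A v = toEuclideanLin B v := by
      simpa [K, sub_eq_zero] using hvK
    have hle := hA.re_inner_toEuclideanLin_le_of_mem_span (x := x) (by simp) hvV
    have hlt := hB.lt_re_inner_toEuclideanLin_of_mem_span (x := x) (by simp) hvU hv0
    rw [hAB] at hle
    exact (hle.trans_lt hlt).false
  have hdisj_dim := Submodule.finrank_add_finrank_le_of_disjoint hdisj
  have hsup_inf := Submodule.finrank_sup_add_finrank_inf_eq V K
  have hsup_le := (V ⊔ K).finrank_le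
  have hrank_nullity : finrank 𝕜 K + (A - B).rank = Fintype.card n :=
    finrank_ker_toEuclideanLin_add_rank (A - B)
  have hcard := card_filter_add_card_filter_not (s := univ) fun i => hB.eigenvalues i ≤ x
  rw [hA.eigenvectorBasis.finrank_span_image] at hsup_inf
  rw [hB.eigenvectorBasis.finrank_span_image] at hdisj_dim
  simp only [finrank_euclideanSpace, card_univ] at hdisj_dim hsup_le hcard
  omega

end IsHermitian

end Matrix

theorem stmt_0_general (N : ℕ) (A B : Matrix (Fin N) (Fin N) ℂ)
    (hA : A.IsHermitian) (hB : B.IsHermitian) :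
    (⨆ x : ℝ, |espCDF hA x - espCDF hB x|) ≤ ((A - B).rank : ℝ) / N := by
  refine ciSup_le fun x => ?_
  have hAB : (#{i | hA.eigenvalues i ≤ x} : ℝ) ≤ #{i | hB.eigenvalues i ≤ x} + (A - B).rank := by
    exact_mod_cast hA.card_eigenvalues_le_le_add_rank hB x
  have hBA : (#{i | hB.eigenvalues i ≤ x} : ℝ) ≤ #{i | hA.eigenvalues i ≤ x} + (A - B).rank := by
    exact_mod_cast rank_sub_comm A B ▸ hB.card_eigenvalues_le_le_add_rank hA x
  rw [espCDF, espCDF, ← sub_div, abs_div, Nat.abs_cast]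
  gcongr
  exact abs_sub_le_iff.2 ⟨by linarith, by linarith⟩

/-- Rank inequality for CDFs of empirical spectral measures of Hermitian matrices. -/
theorem stmt_0 (N : ℕ) (hN : 0 < N) (A B : Matrix (Fin N) (Fin N) ℂ)
    (hA : A.IsHermitian) (hB : B.IsHermitian) :
    (⨆ x : ℝ, |espCDF hA x - espCDF hB x|) ≤ ((A - B).rank : ℝ) / N :=
  stmt_0_general N A B hA hB
end

section
/- The Stieltjes transform g(z) = ∫ (z−x)^{-1} dμ_sc(x) of the semicircular distribution μ_sc of variance σ² satisfies, for every z in the upper half-plane, the equation σ² g(z)² − z g(z) + 1 = 0. -/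
open MeasureTheory Real

/-- The semicircle distribution of variance `σ²`. -/
noncomputable def semicircle (σ : ℝ) : Measure ℝ :=
  volume.withDensity fun x =>
    ENNReal.ofReal (Set.indicator (Set.Icc (-(2*σ)) (2*σ))
      (fun x => (2 * π * σ^2)⁻¹ * Real.sqrt (4 * σ^2 - x^2)) x)

/-!
Write `g` for the Stieltjes transform of `μ_sc`, `P(w) = σ² g(w)² - w g(w) + 1` and
`D(w) = 4σ² - w²`. The integrand `√(4σ² - x²) ((4σ² - z²)/(z - x)² - z/(z - x) + 2)` is
the `x`-derivative of `(4σ² - x²)^{3/2} / (z - x)`, which vanishes at `x = ±2σ`; since `μ_sc` has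
mass one, this says `D g' = 2 - z g`. Consequently `(P / D)' = 0` on the upper half-plane, so
`P / D` is constant there; along `z = i t` with `t → ∞` we have `|g| ≤ 1/t`, so `P` stays bounded
while `|D| ≥ t²`, and the constant is `0`.
-/

open Complex Filter Topology

noncomputable def stieltjesTransform (μ : Measure ℝ) (z : ℂ) : ℂ := ∫ x, (z - x)⁻¹ ∂μ

section Stieltjes

variable {z : ℂ}

lemma abs_im_le_norm_sub_ofReal (z : ℂ) (x : ℝ) : |z.im| ≤ ‖z - x‖ := by
  simpa using abs_im_le_norm (z - x)

lemma sub_ofReal_ne_zero (hz : z.im ≠ 0) (x : ℝ) : z - x ≠ 0 := by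
  intro h
  simpa [h] using abs_im_le_norm_sub_ofReal z x |>.trans_lt' (abs_pos.2 hz)

lemma norm_inv_sub_ofReal_le (hz : z.im ≠ 0) (x : ℝ) : ‖(z - x)⁻¹‖ ≤ |z.im|⁻¹ := by
  rw [norm_inv]
  exact inv_anti₀ (abs_pos.2 hz) (abs_im_le_norm_sub_ofReal z x)

lemma norm_stieltjesTransform_le (μ : Measure ℝ) [IsProbabilityMeasure μ] (hz : z.im ≠ 0) :
    ‖stieltjesTransform μ z‖ ≤ |z.im|⁻¹ := by
  simpa [stieltjesTransform] using norm_integral_le_of_norm_le_const (μ := μ)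
    (Eventually.of_forall (norm_inv_sub_ofReal_le hz))

lemma integrable_inv_sub_ofReal_pow (μ : Measure ℝ) [IsFiniteMeasure μ] (hz : z.im ≠ 0) (n : ℕ) :
    Integrable (fun x : ℝ => ((z - x) ^ n)⁻¹) μ := by
  refine .of_bound (Continuous.aestronglyMeasurable ?_) (|z.im|⁻¹ ^ n) (ae_of_all _ fun x => ?_)
  · exact ((continuous_const.sub continuous_ofReal).pow n).inv₀
      fun x => pow_ne_zero n (sub_ofReal_ne_zero hz x)
  · rw [← inv_pow, norm_pow]
    exact pow_le_pow_left₀ (norm_nonneg _) (norm_inv_sub_ofReal_le hz x) n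

lemma hasDerivAt_stieltjesTransform (μ : Measure ℝ) [IsFiniteMeasure μ] (hz : z.im ≠ 0) :
    HasDerivAt (stieltjesTransform μ) (-∫ x, ((z - x) ^ 2)⁻¹ ∂μ) z := by
  set ε := |z.im| / 2 with hε_def
  have hε : 0 < ε := by positivity
  have him : ∀ w ∈ Metric.ball z ε, ε ≤ |w.im| := fun w hw => by
    have := (abs_im_le_norm (w - z)).trans_lt (mem_ball_iff_norm.1 hw)
    rw [sub_im] at this
    linarith [abs_sub_abs_le_abs_sub z.im w.im, abs_sub_comm w.im z.im]
  have hne : ∀ w ∈ Metric.ball z ε, w.im ≠ 0 := fun w hw =>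
    abs_pos.1 (hε.trans_le (him w hw))
  have hderiv : ∀ x : ℝ, ∀ w ∈ Metric.ball z ε,
      HasDerivAt (fun w : ℂ => (w - x)⁻¹) (-((w - x) ^ 2)⁻¹) w := fun x w hw => by
    simpa [neg_div] using
      ((hasDerivAt_id w).sub_const (x : ℂ)).fun_inv (sub_ofReal_ne_zero (hne w hw) x)
  have hint : ∀ w : ℂ, w.im ≠ 0 → Integrable (fun x : ℝ => (w - x)⁻¹) μ := fun w hw => by
    simpa using integrable_inv_sub_ofReal_pow μ hw 1
  have hbound : ∀ x : ℝ, ∀ w ∈ Metric.ball z ε, ‖-((w - x) ^ 2)⁻¹‖ ≤ (ε ^ 2)⁻¹ := by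
    intro x w hw
    rw [norm_neg, norm_inv, norm_pow]
    gcongr
    exact (him w hw).trans (abs_im_le_norm_sub_ofReal w x)
  obtain ⟨-, hderiv_integral⟩ := hasDerivAt_integral_of_dominated_loc_of_deriv_le (μ := μ)
    (F := fun (w : ℂ) (x : ℝ) => (w - x)⁻¹) (F' := fun w x => -((w - x) ^ 2)⁻¹)
    (bound := fun _ => (ε ^ 2)⁻¹) (Metric.ball_mem_nhds z hε)
    (eventually_of_mem (Metric.ball_mem_nhds z hε) fun w hw =>
      (hint w (hne w hw)).aestronglyMeasurable)
    (hint z hz) (integrable_inv_sub_ofReal_pow μ hz 2).neg.aestronglyMeasurable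
    (Eventually.of_forall hbound) (integrable_const _) (Eventually.of_forall hderiv)
  rw [← integral_neg]
  exact hderiv_integral

end Stieltjes

lemma four_mul_sq_sub_sq_ne_zero (σ : ℝ) {w : ℂ} (hw : w.im ≠ 0) :
    4 * (σ : ℂ) ^ 2 - w ^ 2 ≠ 0 := by
  rw [show 4 * (σ : ℂ) ^ 2 - w ^ 2 = -((w - (2 * σ : ℝ)) * (w - (-(2 * σ) : ℝ))) by
    push_cast; ring]
  exact neg_ne_zero.2 (mul_ne_zero (sub_ofReal_ne_zero hw _) (sub_ofReal_ne_zero hw _))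

lemma quadratic_eq_zero_of_ode {g g' : ℂ → ℂ} (σ : ℝ)
    (hderiv : ∀ w : ℂ, 0 < w.im → HasDerivAt g (g' w) w)
    (hode : ∀ w : ℂ, 0 < w.im → (4 * (σ : ℂ) ^ 2 - w ^ 2) * g' w = 2 - w * g w)
    (hbound : ∀ t : ℝ, 0 < t → ‖g (t * I)‖ ≤ t⁻¹) {z : ℂ} (hz : 0 < z.im) :
    (σ : ℂ) ^ 2 * g z ^ 2 - z * g z + 1 = 0 := by
  set P : ℂ → ℂ := fun w => (σ : ℂ) ^ 2 * g w ^ 2 - w * g w + 1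
  set D : ℂ → ℂ := fun w => 4 * (σ : ℂ) ^ 2 - w ^ 2
  set H : ℂ → ℂ := fun w => P w / D w
  set U : Set ℂ := {w | 0 < w.im}
  have hD : ∀ w ∈ U, D w ≠ 0 := fun w hw => four_mul_sq_sub_sq_ne_zero σ (ne_of_gt hw)
  -- the ODE gives `D * P' = -2 * w * P = D' * P`, so `H = P / D` is locally constant
  have hH : ∀ w ∈ U, HasDerivAt H 0 w := fun w hw => by
    have hP : HasDerivAt P ((σ : ℂ) ^ 2 * (2 * g w * g' w) - (g w + w * g' w)) w := by
      refine ((((hderiv w hw).pow 2).const_mul ((σ : ℂ) ^ 2)).sub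
        ((hasDerivAt_id w).mul (hderiv w hw)) |>.add_const 1).congr_deriv ?_
      simp only [id]
      ring
    have hD' : HasDerivAt D (-(2 * w)) w := by
      simpa [D] using (hasDerivAt_pow 2 w).const_sub (4 * (σ : ℂ) ^ 2)
    refine (hP.div hD' (hD w hw)).congr_deriv ?_
    rw [div_eq_zero_iff]
    left
    linear_combination (2 * (σ : ℂ) ^ 2 * g w - w) * hode w hw
  have hUopen : IsOpen U := isOpen_lt continuous_const continuous_im
  have hconst : ∀ t : ℝ, 0 < t → H z = H (t * I) := fun t ht =>
    hUopen.is_const_of_deriv_eq_zero (convex_halfSpace_im_gt 0).isPreconnected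
      (fun w hw => (hH w hw).differentiableAt.differentiableWithinAt)
      (fun w hw => (hH w hw).deriv) hz (by simpa [U] using ht)
  have hHbound : ∀ᶠ t : ℝ in atTop, ‖H (t * I)‖ ≤ ((σ ^ 2 + 2) / t ^ 2) := by
    filter_upwards [eventually_ge_atTop 1] with t ht
    have ht0 : 0 < t := by linarith
    have hg := hbound t ht0
    have hg1 : ‖g (t * I)‖ ≤ 1 := hg.trans (inv_le_one_of_one_le₀ ht)
    have hnum : ‖P (t * I)‖ ≤ σ ^ 2 + 2 := by
      calc ‖P (t * I)‖ ≤ σ ^ 2 * ‖g (t * I)‖ ^ 2 + t * ‖g (t * I)‖ + 1 := by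
            refine (norm_add_le _ _).trans ?_
            refine add_le_add ((norm_sub_le _ _).trans ?_) (by simp)
            simp [abs_of_pos ht0]
        _ ≤ σ ^ 2 * 1 + t * t⁻¹ + 1 := by gcongr; exact pow_le_one₀ (norm_nonneg _) hg1
        _ = σ ^ 2 + 2 := by field_simp; ring
    have hden : ‖D (t * I)‖ = 4 * σ ^ 2 + t ^ 2 := by
      have : D (t * I) = ((4 * σ ^ 2 + t ^ 2 : ℝ) : ℂ) := by
        simp only [D, mul_pow, I_sq]; push_cast; ring
      rw [this, norm_real, Real.norm_of_nonneg (by positivity)]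
    simp only [H, norm_div, hden]
    gcongr
    linarith [sq_nonneg σ]
  have hlim : Tendsto (fun t : ℝ => H (t * I)) atTop (𝓝 0) :=
    squeeze_zero_norm' hHbound
      (tendsto_const_nhds.div_atTop (tendsto_pow_atTop two_ne_zero))
  have hHz : H z = 0 := by
    refine tendsto_nhds_unique (tendsto_const_nhds.congr' ?_) hlim
    filter_upwards [eventually_gt_atTop 0] with t ht using hconst t ht
  simpa [H, hD z hz] using hHz

lemma integral_semicircle {E : Type*} [NormedAddCommGroup E] [NormedSpace ℝ E] {σ : ℝ}
    (hσ : 0 ≤ σ) (f : ℝ → E) :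
    ∫ x, f x ∂semicircle σ
      = (2 * π * σ ^ 2)⁻¹ • ∫ x in -(2 * σ)..2 * σ, √(4 * σ ^ 2 - x ^ 2) • f x := by
  set ρ : ℝ → ℝ := Set.indicator (Set.Icc (-(2 * σ)) (2 * σ))
    fun x => (2 * π * σ ^ 2)⁻¹ * √(4 * σ ^ 2 - x ^ 2)
  have hρ : ∀ x, 0 ≤ ρ x := fun x => Set.indicator_nonneg (fun _ _ => by positivity) x
  have hρ_meas : Measurable fun x => (ρ x).toNNReal :=
    (Measurable.indicator (by fun_prop) measurableSet_Icc).real_toNNReal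
  change ∫ x, f x ∂volume.withDensity (fun x => ((ρ x).toNNReal : ENNReal)) = _
  rw [integral_withDensity_eq_integral_smul hρ_meas]
  simp_rw [NNReal.smul_def, Real.coe_toNNReal _ (hρ _), ρ, ← Set.indicator_smul_apply_left]
  rw [integral_indicator measurableSet_Icc, integral_Icc_eq_integral_Ioc,
    ← intervalIntegral.integral_of_le (by linarith), ← intervalIntegral.integral_smul]
  simp_rw [smul_smul]

lemma integral_sqrt_four_mul_sq_sub_sq {σ : ℝ} (hσ : 0 < σ) :
    ∫ x in -(2 * σ)..2 * σ, √(4 * σ ^ 2 - x ^ 2) = 2 * π * σ ^ 2 := by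
  have hscale : ∀ x : ℝ, √(4 * σ ^ 2 - x ^ 2) = 2 * σ * √(1 - (x / (2 * σ)) ^ 2) :=
      fun x => by
    rw [show 4 * σ ^ 2 - x ^ 2 = (2 * σ) ^ 2 * (1 - (x / (2 * σ)) ^ 2) by field_simp; ring,
      Real.sqrt_mul (by positivity), Real.sqrt_sq (by positivity)]
  simp_rw [hscale]
  rw [intervalIntegral.integral_comp_div (fun y => 2 * σ * √(1 - y ^ 2)) (by positivity),
    neg_div, div_self (by positivity), intervalIntegral.integral_const_mul,
    integral_sqrt_one_sub_sq, smul_eq_mul]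
  ring

lemma isProbabilityMeasure_semicircle {σ : ℝ} (hσ : 0 < σ) :
    IsProbabilityMeasure (semicircle σ) := by
  rw [isProbabilityMeasure_iff_real]
  have h := integral_semicircle hσ.le fun _ => (1 : ℝ)
  simp only [integral_const, smul_eq_mul, mul_one] at h
  rw [h, integral_sqrt_four_mul_sq_sub_sq hσ]
  field_simp

lemma integral_sqrt_smul_semicircle_ode_eq_zero (σ : ℝ) {z : ℂ} (hz : z.im ≠ 0) :
    ∫ x in -(2 * σ)..2 * σ, √(4 * σ ^ 2 - x ^ 2) •
      ((4 * (σ : ℂ) ^ 2 - z ^ 2) * ((z - x) ^ 2)⁻¹ - z * (z - x)⁻¹ + 2) = 0 := by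
  set Φ : ℝ → ℂ := fun x => ((4 * σ ^ 2 - x ^ 2) ^ (3 / 2 : ℝ) : ℝ) * (z - x)⁻¹
  have hΦ : ∀ x ∈ Set.uIcc (-(2 * σ)) (2 * σ), HasDerivAt Φ (√(4 * σ ^ 2 - x ^ 2) •
      ((4 * (σ : ℂ) ^ 2 - z ^ 2) * ((z - x) ^ 2)⁻¹ - z * (z - x)⁻¹ + 2)) x := by
    intro x hx
    have hx2 : x ^ 2 ≤ 4 * σ ^ 2 := by
      rcases Set.mem_uIcc.1 hx with h | h <;> nlinarith
    have hne := sub_ofReal_ne_zero hz x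
    have hpow : HasDerivAt (fun x : ℝ => (4 * σ ^ 2 - x ^ 2) ^ (3 / 2 : ℝ))
        (-3 * x * √(4 * σ ^ 2 - x ^ 2)) x := by
      refine (((hasDerivAt_pow 2 x).const_sub (4 * σ ^ 2)).rpow_const
        (Or.inr (by norm_num))).congr_deriv ?_
      rw [show (3 / 2 : ℝ) - 1 = 1 / 2 by norm_num, ← Real.sqrt_eq_rpow]
      ring
    have hinv : HasDerivAt (fun x : ℝ => (z - x)⁻¹) ((z - x) ^ 2)⁻¹ x := by
      simpa using ((hasDerivAt_id x).ofReal_comp.const_sub z).fun_inv hne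
    refine (hpow.ofReal_comp.mul hinv).congr_deriv ?_
    have h32 : (4 * σ ^ 2 - x ^ 2) ^ (3 / 2 : ℝ)
        = (4 * σ ^ 2 - x ^ 2) * √(4 * σ ^ 2 - x ^ 2) := by
      rw [Real.sqrt_eq_rpow, ← Real.rpow_one_add' (by linarith) (by norm_num)]
      norm_num
    rw [h32, Complex.real_smul]
    push_cast
    field_simp
    ring
  have hcont : Continuous fun x : ℝ => √(4 * σ ^ 2 - x ^ 2) •
      ((4 * (σ : ℂ) ^ 2 - z ^ 2) * ((z - x) ^ 2)⁻¹ - z * (z - x)⁻¹ + 2) := by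
    have := sub_ofReal_ne_zero hz
    fun_prop (disch := simp [this])
  rw [intervalIntegral.integral_eq_sub_of_hasDerivAt hΦ (hcont.intervalIntegrable _ _)]
  simp [Φ, show 4 * σ ^ 2 - (2 * σ) ^ 2 = 0 by ring]

lemma stieltjesTransform_semicircle_ode {σ : ℝ} (hσ : 0 < σ) {z : ℂ} (hz : z.im ≠ 0) :
    (4 * (σ : ℂ) ^ 2 - z ^ 2) * -∫ x, ((z - x) ^ 2)⁻¹ ∂semicircle σ
      = 2 - z * stieltjesTransform (semicircle σ) z := by
  have := isProbabilityMeasure_semicircle hσ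
  have h := integral_semicircle hσ.le
    fun x : ℝ => (4 * (σ : ℂ) ^ 2 - z ^ 2) * ((z - x) ^ 2)⁻¹ - z * (z - x)⁻¹ + 2
  have h1 : Integrable (fun x : ℝ => (z - x)⁻¹) (semicircle σ) := by
    simpa using integrable_inv_sub_ofReal_pow (semicircle σ) hz 1
  have h2 := integrable_inv_sub_ofReal_pow (semicircle σ) hz 2
  have h21 : Integrable (fun x : ℝ =>
      (4 * (σ : ℂ) ^ 2 - z ^ 2) * ((z - x) ^ 2)⁻¹ - z * (z - x)⁻¹) (semicircle σ) :=
    (h2.const_mul _).sub (h1.const_mul _)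
  rw [integral_sqrt_smul_semicircle_ode_eq_zero σ hz, smul_zero,
    integral_add h21 (integrable_const _),
    integral_sub (h2.const_mul _) (h1.const_mul _), integral_const_mul, integral_const_mul,
    integral_const, probReal_univ, one_smul] at h
  rw [stieltjesTransform]
  linear_combination -h

/-- The Stieltjes transform of the semicircle law satisfies
`σ² g(z)² − z g(z) + 1 = 0` on the upper half-plane. -/
theorem stmt_2 (σ : ℝ) (hσ : 0 < σ) (z : ℂ) (hz : 0 < z.im) :
    σ^2 * (∫ x, (z - (x:ℂ))⁻¹ ∂(semicircle σ))^2
      - z * (∫ x, (z - (x:ℂ))⁻¹ ∂(semicircle σ)) + 1 = 0 := by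
  have := isProbabilityMeasure_semicircle hσ
  refine quadratic_eq_zero_of_ode σ
    (fun w hw => hasDerivAt_stieltjesTransform _ hw.ne')
    (fun w hw => stieltjesTransform_semicircle_ode hσ hw.ne') (fun t ht => ?_) hz
  simpa [abs_of_pos ht] using
    norm_stieltjesTransform_le (semicircle σ) (z := t * I) (by simpa using ht.ne')
end

section
/- For each z ∈ ℂ⁺ and σ > 0 and any compactly supported probability measure ν on ℝ, there exists a unique g ∈ ℂ with Im g < 0 satisfying g = ∫ 1/(z − σ² g − t) dν(t). -/
/-!
Write `F g = ∫ (z - σ²g - t)⁻¹ dν(t)`. For `Im g ≤ 0` every denominator has imaginary part at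
least `Im z > 0`, so `Im F g = -(Im z - σ² Im g) ∫ |z - σ²g - t|⁻² dν < 0` and `|F g| ≤ 1 / Im z`.
Cauchy–Schwarz applied to `F g - F h = σ² (g - h) ∫ (z - σ²g - t)⁻¹ (z - σ²h - t)⁻¹ dν`, together
with this formula for `Im F`, shows that `F` multiplies the hyperbolic quantity
`|g - h|² / (Im g Im h)` by at most `σ⁴ Im g Im h / ((Im z - σ² Im g) (Im z - σ² Im h)) < 1`,
and by at most `(σ² / (σ² + Im z²))²` on the disc `|g| ≤ 1 / Im z`, which contains the image of `F`.
The first bound gives uniqueness; the second makes the iterates `F^[n] 0` a Cauchy sequence, whose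
limit is the fixed point.
-/

open MeasureTheory Complex

theorem sq_integral_mul_le_integral_sq_mul_integral_sq {α : Type*} [MeasurableSpace α]
    {μ : Measure α} {f g : α → ℝ} (hf : MemLp f 2 μ) (hg : MemLp g 2 μ) :
    (∫ a, f a * g a ∂μ) ^ 2 ≤ (∫ a, f a ^ 2 ∂μ) * ∫ a, g a ^ 2 ∂μ := by
  have hfg : Integrable (fun a => f a * g a) μ := hf.integrable_mul hg
  have hquad : ∀ x : ℝ,
      0 ≤ (∫ a, f a ^ 2 ∂μ) * (x * x) + (2 * ∫ a, f a * g a ∂μ) * x + ∫ a, g a ^ 2 ∂μ := by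
    intro x
    calc 0 ≤ ∫ a, (x * f a + g a) ^ 2 ∂μ := integral_nonneg fun a => sq_nonneg _
      _ = ∫ a, (x ^ 2 * f a ^ 2 + 2 * x * (f a * g a)) + g a ^ 2 ∂μ := by
          congr 1; ext a; ring
      _ = _ := by
          rw [integral_add ?_ hg.integrable_sq, integral_add ?_ ?_, integral_const_mul,
            integral_const_mul]
          · ring
          exacts [hf.integrable_sq.const_mul _, hfg.const_mul _,
            (hf.integrable_sq.const_mul _).add (hfg.const_mul _)]
  have := discrim_le_zero hquad
  rw [discrim] at this
  linarith

namespace SemicircleSubordination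

noncomputable def fixedPointMap (ν : Measure ℝ) (σ : ℝ) (z g : ℂ) : ℂ :=
  ∫ t, (z - σ ^ 2 * g - t)⁻¹ ∂ν

noncomputable def sqNormIntegral (ν : Measure ℝ) (σ : ℝ) (z g : ℂ) : ℝ :=
  ∫ t, ‖(z - σ ^ 2 * g - t)⁻¹‖ ^ 2 ∂ν

variable {ν : Measure ℝ} {σ : ℝ} {z g h : ℂ}

section Pointwise

lemma neg_im_le_norm (w : ℂ) : -w.im ≤ ‖w‖ :=
  (neg_le_abs _).trans (abs_im_le_norm w)

lemma im_sub_sq_mul_sub_ofReal (t : ℝ) : (z - σ ^ 2 * g - t).im = z.im - σ ^ 2 * g.im := by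
  simp [← ofReal_pow]

lemma im_le_im_sub_sq_mul_sub_ofReal (hg : g.im ≤ 0) (t : ℝ) :
    z.im ≤ (z - σ ^ 2 * g - t).im := by
  rw [im_sub_sq_mul_sub_ofReal]
  nlinarith [sq_nonneg σ]

lemma norm_inv_sub_sq_mul_sub_ofReal_le (hz : 0 < z.im) (hg : g.im ≤ 0) (t : ℝ) :
    ‖(z - σ ^ 2 * g - t)⁻¹‖ ≤ z.im⁻¹ := by
  rw [norm_inv]
  exact inv_anti₀ hz <| (im_le_im_sub_sq_mul_sub_ofReal hg t).trans (im_le_norm _)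

lemma sub_sq_mul_sub_ofReal_ne_zero (hz : 0 < z.im) (hg : g.im ≤ 0) (t : ℝ) :
    z - σ ^ 2 * g - t ≠ 0 := fun h0 => by
  have := im_le_im_sub_sq_mul_sub_ofReal (σ := σ) (z := z) hg t
  rw [h0, zero_im] at this
  linarith

lemma continuous_inv_sub_sq_mul_sub_ofReal (hz : 0 < z.im) (hg : g.im ≤ 0) :
    Continuous fun t : ℝ => (z - σ ^ 2 * g - t)⁻¹ :=
  Continuous.inv₀ (by fun_prop) (sub_sq_mul_sub_ofReal_ne_zero hz hg)

lemma memLp_inv_sub_sq_mul_sub_ofReal [IsFiniteMeasure ν] (hz : 0 < z.im) (hg : g.im ≤ 0)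
    (p : ENNReal) : MemLp (fun t : ℝ => (z - σ ^ 2 * g - t)⁻¹) p ν :=
  .of_bound (continuous_inv_sub_sq_mul_sub_ofReal hz hg).aestronglyMeasurable _
    (ae_of_all _ (norm_inv_sub_sq_mul_sub_ofReal_le hz hg))

end Pointwise

section FiniteMeasure

variable [IsFiniteMeasure ν]

lemma im_fixedPointMap (hz : 0 < z.im) (hg : g.im ≤ 0) :
    (fixedPointMap ν σ z g).im = -((z.im - σ ^ 2 * g.im) * sqNormIntegral ν σ z g) := by
  have hint := memLp_one_iff_integrable.1 (memLp_inv_sub_sq_mul_sub_ofReal (ν := ν) (σ := σ) hz hg 1)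
  have hpt : ∀ t : ℝ, ((z - σ ^ 2 * g - t)⁻¹).im
      = -(z.im - σ ^ 2 * g.im) * ‖(z - σ ^ 2 * g - t)⁻¹‖ ^ 2 := by
    intro t
    rw [inv_im, norm_inv, inv_pow, Complex.sq_norm, im_sub_sq_mul_sub_ofReal]
    ring
  rw [fixedPointMap, ← RCLike.im_to_complex, ← integral_im hint]
  simp only [RCLike.im_to_complex, hpt, integral_const_mul, sqNormIntegral]
  ring

lemma fixedPointMap_sub (hz : 0 < z.im) (hg : g.im ≤ 0) (hh : h.im ≤ 0) :
    fixedPointMap ν σ z g - fixedPointMap ν σ z h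
      = σ ^ 2 * (g - h) * ∫ t, (z - σ ^ 2 * g - t)⁻¹ * (z - σ ^ 2 * h - t)⁻¹ ∂ν := by
  rw [fixedPointMap, fixedPointMap, ← integral_sub, ← integral_const_mul]
  · congr 1
    ext t
    have hg0 := sub_sq_mul_sub_ofReal_ne_zero (σ := σ) hz hg t
    have hh0 := sub_sq_mul_sub_ofReal_ne_zero (σ := σ) hz hh t
    field_simp
    ring
  all_goals exact memLp_one_iff_integrable.1 (memLp_inv_sub_sq_mul_sub_ofReal hz ‹_› 1)

lemma sq_norm_fixedPointMap_sub_le (hz : 0 < z.im) (hg : g.im ≤ 0) (hh : h.im ≤ 0) :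
    ‖fixedPointMap ν σ z g - fixedPointMap ν σ z h‖ ^ 2
      ≤ σ ^ 4 * ‖g - h‖ ^ 2 * (sqNormIntegral ν σ z g * sqNormIntegral ν σ z h) := by
  have hcs := sq_integral_mul_le_integral_sq_mul_integral_sq
    (memLp_inv_sub_sq_mul_sub_ofReal (ν := ν) (σ := σ) hz hg 2).norm
    (memLp_inv_sub_sq_mul_sub_ofReal (ν := ν) (σ := σ) hz hh 2).norm
  have hσ2 : ‖(σ : ℂ) ^ 2‖ = σ ^ 2 := by rw [norm_pow, norm_real, Real.norm_eq_abs, sq_abs]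
  calc ‖fixedPointMap ν σ z g - fixedPointMap ν σ z h‖ ^ 2
      = (σ ^ 2 * ‖g - h‖) ^ 2
          * ‖∫ t, (z - σ ^ 2 * g - t)⁻¹ * (z - σ ^ 2 * h - t)⁻¹ ∂ν‖ ^ 2 := by
        rw [fixedPointMap_sub hz hg hh, norm_mul, norm_mul, hσ2, mul_pow]
    _ ≤ (σ ^ 2 * ‖g - h‖) ^ 2
          * (∫ t, ‖(z - σ ^ 2 * g - t)⁻¹‖ * ‖(z - σ ^ 2 * h - t)⁻¹‖ ∂ν) ^ 2 := by
        gcongr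
        simpa only [norm_mul] using norm_integral_le_integral_norm
          (fun t : ℝ => (z - σ ^ 2 * g - t)⁻¹ * (z - σ ^ 2 * h - t)⁻¹) (μ := ν)
    _ ≤ (σ ^ 2 * ‖g - h‖) ^ 2 * (sqNormIntegral ν σ z g * sqNormIntegral ν σ z h) := by
        gcongr
        exact hcs
    _ = _ := by ring

lemma sq_norm_fixedPointMap_sub_mul_le (hz : 0 < z.im) (hg : g.im ≤ 0) (hh : h.im ≤ 0) :
    ‖fixedPointMap ν σ z g - fixedPointMap ν σ z h‖ ^ 2
        * ((z.im - σ ^ 2 * g.im) * (z.im - σ ^ 2 * h.im))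
      ≤ σ ^ 4 * ‖g - h‖ ^ 2 * ((fixedPointMap ν σ z g).im * (fixedPointMap ν σ z h).im) := by
  have hg' : 0 ≤ z.im - σ ^ 2 * g.im := by nlinarith [sq_nonneg σ]
  have hh' : 0 ≤ z.im - σ ^ 2 * h.im := by nlinarith [sq_nonneg σ]
  rw [im_fixedPointMap hz hg, im_fixedPointMap hz hh]
  calc _ ≤ σ ^ 4 * ‖g - h‖ ^ 2 * (sqNormIntegral ν σ z g * sqNormIntegral ν σ z h)
          * ((z.im - σ ^ 2 * g.im) * (z.im - σ ^ 2 * h.im)) := by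
        gcongr
        exact sq_norm_fixedPointMap_sub_le hz hg hh
    _ = _ := by ring

end FiniteMeasure

lemma eq_of_fixedPointMap_eq [IsFiniteMeasure ν] (hz : 0 < z.im) (hg : g.im < 0)
    (hgF : fixedPointMap ν σ z g = g) (hh : h.im < 0) (hhF : fixedPointMap ν σ z h = h) :
    g = h := by
  have key := sq_norm_fixedPointMap_sub_mul_le (ν := ν) (σ := σ) hz hg.le hh.le
  rw [hgF, hhF] at key
  have hpos : 0 < z.im ^ 2 - z.im * σ ^ 2 * (g.im + h.im) := by
    nlinarith [mul_nonneg (mul_nonneg hz.le (sq_nonneg σ)) (by linarith : 0 ≤ -(g.im + h.im))]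
  have : ‖g - h‖ ^ 2 * (z.im ^ 2 - z.im * σ ^ 2 * (g.im + h.im)) ≤ 0 := by
    linear_combination key
  have : ‖g - h‖ ^ 2 ≤ 0 := nonpos_of_mul_nonpos_left this hpos
  simpa [sub_eq_zero] using this

section ProbabilityMeasure

variable [IsProbabilityMeasure ν]

lemma sqNormIntegral_pos (hz : 0 < z.im) (hg : g.im ≤ 0) : 0 < sqNormIntegral ν σ z g := by
  have hint := (memLp_inv_sub_sq_mul_sub_ofReal (ν := ν) (σ := σ) hz hg 2).norm.integrable_sq
  rw [sqNormIntegral, integral_pos_iff_support_of_nonneg (fun t => sq_nonneg _) hint]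
  have hsupp : Function.support (fun t : ℝ => ‖(z - σ ^ 2 * g - t)⁻¹‖ ^ 2) = Set.univ :=
    Function.support_eq_univ fun t => by
      simpa using sub_sq_mul_sub_ofReal_ne_zero (σ := σ) hz hg t
  rw [hsupp, measure_univ]
  exact one_pos

lemma sqNormIntegral_le (hz : 0 < z.im) (hg : g.im ≤ 0) :
    sqNormIntegral ν σ z g ≤ z.im⁻¹ ^ 2 := by
  have hint := (memLp_inv_sub_sq_mul_sub_ofReal (ν := ν) (σ := σ) hz hg 2).norm.integrable_sq
  calc sqNormIntegral ν σ z g ≤ ∫ _, z.im⁻¹ ^ 2 ∂ν :=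
        integral_mono hint (integrable_const _) fun t => by
          gcongr
          exact norm_inv_sub_sq_mul_sub_ofReal_le hz hg t
    _ = z.im⁻¹ ^ 2 := by simp

lemma im_fixedPointMap_neg (hz : 0 < z.im) (hg : g.im ≤ 0) : (fixedPointMap ν σ z g).im < 0 := by
  have : 0 < z.im - σ ^ 2 * g.im := by nlinarith [sq_nonneg σ]
  rw [im_fixedPointMap hz hg, neg_lt_zero]
  exact mul_pos this (sqNormIntegral_pos hz hg)

lemma norm_fixedPointMap_le (hz : 0 < z.im) (hg : g.im ≤ 0) :
    ‖fixedPointMap ν σ z g‖ ≤ z.im⁻¹ := by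
  simpa [fixedPointMap] using norm_integral_le_of_norm_le_const
    (ae_of_all ν (norm_inv_sub_sq_mul_sub_ofReal_le (σ := σ) hz hg))

lemma norm_fixedPointMap_sub_le (hz : 0 < z.im) (hg : g.im ≤ 0) (hh : h.im ≤ 0) :
    ‖fixedPointMap ν σ z g - fixedPointMap ν σ z h‖ ≤ σ ^ 2 * z.im⁻¹ ^ 2 * ‖g - h‖ := by
  refine le_of_pow_le_pow_left₀ two_ne_zero (by positivity) ?_
  calc _ ≤ σ ^ 4 * ‖g - h‖ ^ 2 * (sqNormIntegral ν σ z g * sqNormIntegral ν σ z h) :=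
        sq_norm_fixedPointMap_sub_le hz hg hh
    _ ≤ σ ^ 4 * ‖g - h‖ ^ 2 * (z.im⁻¹ ^ 2 * z.im⁻¹ ^ 2) :=
        mul_le_mul_of_nonneg_left (mul_le_mul (sqNormIntegral_le hz hg) (sqNormIntegral_le hz hh)
          (sqNormIntegral_pos hz hh).le (by positivity)) (by positivity)
    _ = _ := by ring

lemma continuousOn_fixedPointMap (hz : 0 < z.im) :
    ContinuousOn (fixedPointMap ν σ z) {g | g.im ≤ 0} :=
  (LipschitzOnWith.of_dist_le' fun g hg h hh => by
    simpa only [dist_eq_norm] using norm_fixedPointMap_sub_le hz hg hh).continuousOn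

lemma sq_norm_fixedPointMap_sub_div_le (hz : 0 < z.im) (hg : g.im < 0) (hh : h.im < 0)
    (hgn : ‖g‖ ≤ z.im⁻¹) (hhn : ‖h‖ ≤ z.im⁻¹) :
    ‖fixedPointMap ν σ z g - fixedPointMap ν σ z h‖ ^ 2
        / ((fixedPointMap ν σ z g).im * (fixedPointMap ν σ z h).im)
      ≤ (σ ^ 2 / (σ ^ 2 + z.im ^ 2)) ^ 2 * (‖g - h‖ ^ 2 / (g.im * h.im)) := by
  have hF : 0 < (fixedPointMap ν σ z g).im * (fixedPointMap ν σ z h).im :=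
    mul_pos_of_neg_of_neg (im_fixedPointMap_neg hz hg.le) (im_fixedPointMap_neg hz hh.le)
  have hgh : 0 < g.im * h.im := mul_pos_of_neg_of_neg hg hh
  have hden : 0 < (z.im - σ ^ 2 * g.im) * (z.im - σ ^ 2 * h.im) := by
    apply mul_pos <;> nlinarith [sq_nonneg σ]
  have hbound : ∀ {w : ℂ}, ‖w‖ ≤ z.im⁻¹ → -w.im * (σ ^ 2 + z.im ^ 2) ≤ z.im - σ ^ 2 * w.im := by
    intro w hw
    have : -w.im * z.im ≤ 1 :=
      (mul_le_mul_of_nonneg_right ((neg_im_le_norm w).trans hw) hz.le).trans_eq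
        (inv_mul_cancel₀ hz.ne')
    nlinarith
  calc _ ≤ σ ^ 4 * ‖g - h‖ ^ 2 / ((z.im - σ ^ 2 * g.im) * (z.im - σ ^ 2 * h.im)) := by
        rw [div_le_div_iff₀ hF hden]
        exact sq_norm_fixedPointMap_sub_mul_le hz hg.le hh.le
    _ ≤ σ ^ 4 * ‖g - h‖ ^ 2 / (g.im * h.im * (σ ^ 2 + z.im ^ 2) ^ 2) := by
        refine div_le_div_of_nonneg_left (by positivity) (by positivity) ?_
        calc g.im * h.im * (σ ^ 2 + z.im ^ 2) ^ 2
            = (-g.im * (σ ^ 2 + z.im ^ 2)) * (-h.im * (σ ^ 2 + z.im ^ 2)) := by ring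
          _ ≤ _ := mul_le_mul (hbound hgn) (hbound hhn)
                (mul_nonneg (neg_nonneg.2 hh.le) (by positivity)) (by nlinarith [sq_nonneg σ])
    _ = _ := by field_simp

lemma im_iterate_fixedPointMap_nonpos (hz : 0 < z.im) (n : ℕ) :
    ((fixedPointMap ν σ z)^[n] 0).im ≤ 0 := by
  induction n with
  | zero => simp
  | succ n ih =>
    rw [Function.iterate_succ_apply']
    exact (im_fixedPointMap_neg hz ih).le

lemma im_iterate_succ_fixedPointMap_neg (hz : 0 < z.im) (n : ℕ) :
    ((fixedPointMap ν σ z)^[n + 1] 0).im < 0 := by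
  rw [Function.iterate_succ_apply']
  exact im_fixedPointMap_neg hz (im_iterate_fixedPointMap_nonpos hz n)

lemma norm_iterate_succ_fixedPointMap_le (hz : 0 < z.im) (n : ℕ) :
    ‖(fixedPointMap ν σ z)^[n + 1] 0‖ ≤ z.im⁻¹ := by
  rw [Function.iterate_succ_apply']
  exact norm_fixedPointMap_le hz (im_iterate_fixedPointMap_nonpos hz n)

lemma cauchySeq_iterate_fixedPointMap (hz : 0 < z.im) :
    CauchySeq fun n => (fixedPointMap ν σ z)^[n + 1] 0 := by
  set u : ℕ → ℂ := fun n => (fixedPointMap ν σ z)^[n + 1] 0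
  have hstep : ∀ n, fixedPointMap ν σ z (u n) = u (n + 1) := fun n =>
    (Function.iterate_succ_apply' _ (n + 1) 0).symm
  have him : ∀ n, (u n).im < 0 := im_iterate_succ_fixedPointMap_neg hz
  have hnorm : ∀ n, ‖u n‖ ≤ z.im⁻¹ := norm_iterate_succ_fixedPointMap_le hz
  set r := σ ^ 2 / (σ ^ 2 + z.im ^ 2)
  have hr0 : 0 ≤ r := by positivity
  have hr1 : r < 1 := (div_lt_one (by positivity)).2 (by nlinarith)
  set W : ℕ → ℝ := fun n => ‖u (n + 1) - u n‖ ^ 2 / ((u (n + 1)).im * (u n).im)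
  have hW0 : 0 ≤ W 0 := div_nonneg (sq_nonneg _) (mul_pos_of_neg_of_neg (him 1) (him 0)).le
  have hW : ∀ n, W n ≤ (r ^ 2) ^ n * W 0 := by
    intro n
    induction n with
    | zero => simp
    | succ n ih =>
      calc W (n + 1) ≤ r ^ 2 * W n := by
            have := sq_norm_fixedPointMap_sub_div_le (ν := ν) (σ := σ) hz (him (n + 1)) (him n)
              (hnorm _) (hnorm _)
            rwa [hstep (n + 1), hstep n] at this
        _ ≤ (r ^ 2) ^ (n + 1) * W 0 := by
            rw [pow_succ' (r ^ 2) n, mul_assoc]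
            exact mul_le_mul_of_nonneg_left ih (sq_nonneg r)
  refine cauchySeq_of_le_geometric r (√(W 0) * z.im⁻¹) hr1 fun n => ?_
  rw [dist_comm, dist_eq_norm]
  refine le_of_pow_le_pow_left₀ two_ne_zero
    (mul_nonneg (mul_nonneg (Real.sqrt_nonneg _) (inv_nonneg.2 hz.le)) (pow_nonneg hr0 n)) ?_
  have him_mul : (u (n + 1)).im * (u n).im ≤ z.im⁻¹ * z.im⁻¹ := by
    rw [← neg_mul_neg]
    exact mul_le_mul ((neg_im_le_norm _).trans (hnorm _)) ((neg_im_le_norm _).trans (hnorm _))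
      (neg_nonneg.2 (him n).le) (inv_nonneg.2 hz.le)
  calc ‖u (n + 1) - u n‖ ^ 2 = W n * ((u (n + 1)).im * (u n).im) :=
        (div_mul_cancel₀ _ (mul_pos_of_neg_of_neg (him _) (him n)).ne').symm
    _ ≤ (r ^ 2) ^ n * W 0 * (z.im⁻¹ * z.im⁻¹) :=
        mul_le_mul (hW n) him_mul (mul_pos_of_neg_of_neg (him _) (him n)).le
          (mul_nonneg (pow_nonneg (sq_nonneg r) n) hW0)
    _ = (√(W 0) * z.im⁻¹ * r ^ n) ^ 2 := by
        rw [mul_pow, mul_pow, Real.sq_sqrt hW0]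
        ring

lemma exists_fixedPointMap_eq (hz : 0 < z.im) : ∃ g, g.im < 0 ∧ fixedPointMap ν σ z g = g := by
  obtain ⟨g, hlim⟩ := cauchySeq_tendsto_of_complete
    (cauchySeq_iterate_fixedPointMap (ν := ν) (σ := σ) hz)
  have hmem : ∀ n, (fixedPointMap ν σ z)^[n + 1] 0 ∈ {w : ℂ | w.im ≤ 0} := fun n =>
    im_iterate_fixedPointMap_nonpos hz (n + 1)
  have hg : g.im ≤ 0 := (isClosed_le continuous_im continuous_const).mem_of_tendsto hlim
    (Filter.Eventually.of_forall hmem)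
  have hFg : fixedPointMap ν σ z g = g := by
    refine tendsto_nhds_unique ?_ (hlim.comp (Filter.tendsto_add_atTop_nat 1))
    have := ((continuousOn_fixedPointMap (ν := ν) (σ := σ) hz) g hg).tendsto.comp
      (tendsto_nhdsWithin_iff.2 ⟨hlim, Filter.Eventually.of_forall hmem⟩)
    convert this using 1
    funext n
    exact Function.iterate_succ_apply' _ (n + 1) 0
  exact ⟨g, hFg ▸ im_fixedPointMap_neg hz hg, hFg⟩

end ProbabilityMeasure

end SemicircleSubordination

theorem stmt_13_general (ν : Measure ℝ) [IsProbabilityMeasure ν]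
    (σ : ℝ) (z : ℂ) (hz : 0 < z.im) :
    ∃! g : ℂ, g.im < 0 ∧ g = ∫ t, (z - σ^2 * g - (t:ℂ))⁻¹ ∂ν := by
  obtain ⟨g, hg, hFg⟩ := SemicircleSubordination.exists_fixedPointMap_eq (ν := ν) (σ := σ) hz
  exact ⟨g, ⟨hg, hFg.symm⟩, fun h ⟨hh, hFh⟩ =>
    SemicircleSubordination.eq_of_fixedPointMap_eq hz hh hFh.symm hg hFg⟩

/-- For each `z` in the upper half-plane there is a unique `g` with `Im g < 0`
satisfying the fixed point equation of the deformed semicircular law. -/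
theorem stmt_13 (ν : Measure ℝ) [IsProbabilityMeasure ν]
    (K : Set ℝ) (hK : IsCompact K) (hKfull : ν Kᶜ = 0)
    (σ : ℝ) (hσ : 0 < σ) (z : ℂ) (hz : 0 < z.im) :
    ∃! g : ℂ, g.im < 0 ∧ g = ∫ t, (z - σ^2 * g - (t:ℂ))⁻¹ ∂ν :=
  stmt_13_general ν σ z hz
end

section
/- Let ν be a compactly supported probability measure on ℝ whose support is a finite union of disjoint closed bounded intervals, σ > 0, and let 𝒪₁ = {u ∈ ℝ ∖ supp(ν) : 1 − σ² ∫ (u−x)^{-2} dν(x) > 0}. Then ℝ ∖ 𝒪₁ is a finite union of disjoint closed bounded intervals [u_1,v_1], …, [u_p,v_p], each of which has nonempty intersection with supp(ν), and supp(ν) ⊆ ∪_l [u_l, v_l]. -/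
/-!
Off the support, `h(u) = ∫ (u - x)⁻² dν(x)` is convex on every interval avoiding the support,
because each integrand is; being convex on open intervals, it is also continuous there. Hence
`𝒪₁ = {h < σ⁻²} ∖ supp ν` meets each bounded gap of the support in an open interval (possibly
empty), and each of the two unbounded components in a ray, since `h` is small far from the
support. So `ℝ ∖ 𝒪₁` is what remains of `ℝ` after removing two rays and at most one open interval
from each gap: closed intervals, each containing a piece of the support, any two consecutive ones
separated by a removed nonempty open interval.
-/

open MeasureTheory Set Filter Topology

def msupport (ν : Measure ℝ) : Set ℝ := {x : ℝ | ∀ U ∈ nhds x, 0 < ν U}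

section OpenOrdConnected

variable {α : Type*} [ConditionallyCompleteLinearOrder α] [TopologicalSpace α] [OrderTopology α]
  [DenselyOrdered α] {s : Set α}

lemma IsOpen.csSup_notMem [NoMaxOrder α] (hs : IsOpen s) (hb : BddAbove s) : sSup s ∉ s := by
  intro h
  obtain ⟨u, hu, hus⟩ := exists_Ico_subset_of_mem_nhds (hs.mem_nhds h) (exists_gt _)
  obtain ⟨y, hy, hyu⟩ := exists_between hu
  exact (le_csSup hb (hus ⟨hy.le, hyu⟩)).not_gt hy

lemma IsOpen.csInf_notMem [NoMinOrder α] (hs : IsOpen s) (hb : BddBelow s) : sInf s ∉ s :=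
  IsOpen.csSup_notMem (α := αᵒᵈ) hs hb

lemma IsOpen.exists_eq_Iio [NoMaxOrder α] [NoMinOrder α] {a : α} (hs : IsOpen s)
    (hc : s.OrdConnected) (ha : s ⊆ Iio a) (hbot : ∀ᶠ x in atBot, x ∈ s) :
    ∃ e ≤ a, s = Iio e := by
  have hb : ¬BddBelow s := not_bddBelow_iff.2 fun x => (hbot.and (eventually_lt_atBot x)).exists
  have hba : BddAbove s := ⟨a, fun x hx => (ha hx).le⟩
  refine ⟨sSup s, csSup_le hbot.exists fun x hx => (ha hx).le,
    Subset.antisymm (fun x hx => ?_) (hc.isPreconnected.Iio_csSup_subset hb hba)⟩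
  exact (le_csSup hba hx).lt_of_ne (ne_of_mem_of_not_mem hx (hs.csSup_notMem hba))

lemma IsOpen.exists_eq_Ioi [NoMaxOrder α] [NoMinOrder α] {a : α} (hs : IsOpen s)
    (hc : s.OrdConnected) (ha : s ⊆ Ioi a) (htop : ∀ᶠ x in atTop, x ∈ s) :
    ∃ f ≥ a, s = Ioi f :=
  IsOpen.exists_eq_Iio (α := αᵒᵈ) hs hc.dual ha htop

lemma IsOpen.exists_eq_Ioo [NoMaxOrder α] [NoMinOrder α] {p q : α} (hs : IsOpen s)
    (hc : s.OrdConnected) (hpq : p ≤ q) (hsub : s ⊆ Ioo p q) :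
    ∃ c d, p ≤ c ∧ c ≤ d ∧ d ≤ q ∧ s = Ioo c d := by
  rcases s.eq_empty_or_nonempty with rfl | hne
  · exact ⟨p, p, le_rfl, le_rfl, hpq, Ioo_self p |>.symm⟩
  have hb : BddBelow s := ⟨p, fun x hx => (hsub hx).1.le⟩
  have ha : BddAbove s := ⟨q, fun x hx => (hsub hx).2.le⟩
  refine ⟨sInf s, sSup s, le_csInf hne fun x hx => (hsub hx).1.le, csInf_le_csSup hne hb ha,
    csSup_le hne fun x hx => (hsub hx).2.le, Subset.antisymm (fun x hx => ⟨?_, ?_⟩)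
    (IsConnected.Ioo_csInf_csSup_subset ⟨hne, hc.isPreconnected⟩ hb ha)⟩
  · exact (csInf_le hb hx).lt_of_ne' (ne_of_mem_of_not_mem hx (hs.csInf_notMem hb))
  · exact (le_csSup ha hx).lt_of_ne (ne_of_mem_of_not_mem hx (hs.csSup_notMem ha))

end OpenOrdConnected

lemma compl_biUnion_Icc {A B : ℕ → ℝ} (hA : Monotone A) (hB : Monotone B) (n : ℕ) :
    (⋃ i ≤ n, Icc (A i) (B i))ᶜ = Iio (A 0) ∪ (⋃ i < n, Ioo (B i) (A (i + 1))) ∪ Ioi (B n) := by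
  refine Subset.antisymm ?_ ?_
  · induction n with
    | zero =>
      intro w hw
      simp only [nonpos_iff_eq_zero, iUnion_iUnion_eq_left, mem_compl_iff, mem_Icc, not_and_or,
        not_le] at hw
      rcases hw with hw | hw
      · exact Or.inl (Or.inl hw)
      · exact Or.inr hw
    | succ n ih =>
      rw [biUnion_le_succ, compl_union, biUnion_lt_succ]
      rintro w ⟨hw, hwn⟩
      rcases ih hw with (hw | hw) | hw
      · exact Or.inl (Or.inl hw)
      · exact Or.inl (Or.inr (Or.inl hw))
      · by_cases h : w < A (n + 1)
        · exact Or.inl (Or.inr (Or.inr ⟨hw, h⟩))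
        · exact Or.inr (lt_of_not_ge fun h' => hwn ⟨not_lt.1 h, h'⟩)
  · simp only [compl_iUnion₂, subset_iInter₂_iff]
    rintro j hj w ((hw | hw) | hw) ⟨hAw, hwB⟩
    · exact (mem_Iio.1 hw).not_ge ((hA (Nat.zero_le j)).trans hAw)
    · obtain ⟨i, hi, hBw, hwA⟩ := mem_iUnion₂.1 hw
      rcases le_or_gt j i with hji | hij
      · exact hBw.not_ge (hwB.trans (hB hji))
      · exact hwA.not_ge ((hA hij).trans hAw)
    · exact (mem_Ioi.1 hw).not_ge (hwB.trans (hB hj))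

lemma exists_compl_biUnion_Icc_inter_eq {A B : ℕ → ℝ} (hA : Monotone A) (hB : Monotone B)
    {n : ℕ} (hBA : ∀ i < n, B i ≤ A (i + 1)) {T : Set ℝ}
    (hT : ∀ I : Set ℝ, IsOpen I → I.OrdConnected → Disjoint I (⋃ i ≤ n, Icc (A i) (B i)) →
      IsOpen (I ∩ T) ∧ (I ∩ T).OrdConnected)
    (hbot : ∀ᶠ w in atBot, w ∈ T) (htop : ∀ᶠ w in atTop, w ∈ T) :
    ∃ (e f : ℝ) (c d : ℕ → ℝ), e ≤ A 0 ∧ B n ≤ f ∧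
      (∀ i < n, B i ≤ c i ∧ c i ≤ d i ∧ d i ≤ A (i + 1)) ∧
      (⋃ i ≤ n, Icc (A i) (B i))ᶜ ∩ T = Iio e ∪ (⋃ i < n, Ioo (c i) (d i)) ∪ Ioi f := by
  have hK := compl_biUnion_Icc hA hB n
  have hT' : ∀ I, IsOpen I → I.OrdConnected → I ⊆ (⋃ i ≤ n, Icc (A i) (B i))ᶜ →
      IsOpen (I ∩ T) ∧ (I ∩ T).OrdConnected :=
    fun I hIo hIc hIK => hT I hIo hIc (subset_compl_iff_disjoint_right.1 hIK)
  obtain ⟨hLo, hLc⟩ := hT' _ isOpen_Iio ordConnected_Iio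
    (hK ▸ subset_union_left.trans subset_union_left)
  obtain ⟨e, he, hLe⟩ := hLo.exists_eq_Iio hLc inter_subset_left
    ((eventually_lt_atBot _).and hbot)
  obtain ⟨hRo, hRc⟩ := hT' _ isOpen_Ioi ordConnected_Ioi (hK ▸ subset_union_right)
  obtain ⟨f, hf, hRf⟩ := hRo.exists_eq_Ioi hRc inter_subset_left
    ((eventually_gt_atTop _).and htop)
  have hgap : ∀ i, ∃ c d, i < n → B i ≤ c ∧ c ≤ d ∧ d ≤ A (i + 1) ∧
      Ioo (B i) (A (i + 1)) ∩ T = Ioo c d := by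
    intro i
    by_cases hi : i < n
    · obtain ⟨hGo, hGc⟩ := hT' _ isOpen_Ioo ordConnected_Ioo
        (by rw [hK]; exact fun _ hw => Or.inl (Or.inr (mem_iUnion₂.2 ⟨i, hi, hw⟩)))
      obtain ⟨c, d, h⟩ := hGo.exists_eq_Ioo hGc (hBA i hi) inter_subset_left
      exact ⟨c, d, fun _ => h⟩
    · exact ⟨0, 0, fun h => absurd h hi⟩
  choose c d hcd using hgap
  refine ⟨e, f, c, d, he, hf, fun i hi => ⟨(hcd i hi).1, (hcd i hi).2.1, (hcd i hi).2.2.1⟩, ?_⟩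
  rw [hK, union_inter_distrib_right, union_inter_distrib_right, iUnion₂_inter, hLe, hRf,
    iUnion₂_congr fun i hi => (hcd i hi).2.2.2]

def IsSeparatedIccUnion (C K : Set ℝ) : Prop :=
  ∃ (p : ℕ) (u v : Fin p → ℝ), 0 < p ∧ (∀ l, u l ≤ v l) ∧ (∀ l l', l < l' → v l < u l') ∧
    C = ⋃ l, Icc (u l) (v l) ∧ ∀ l, (Icc (u l) (v l) ∩ K).Nonempty

lemma isSeparatedIccUnion_Icc {K : Set ℝ} {e f : ℝ} (hK : (Icc e f ∩ K).Nonempty) :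
    IsSeparatedIccUnion (Icc e f) K :=
  ⟨1, fun _ => e, fun _ => f, one_pos, fun _ => nonempty_Icc.1 (hK.mono inter_subset_left),
    fun l l' h => (h.ne (Subsingleton.elim l l')).elim, (iUnion_const _).symm, fun _ => hK⟩

lemma IsSeparatedIccUnion.union_Icc {C K : Set ℝ} {d f : ℝ} (hC : IsSeparatedIccUnion C K)
    (hCd : C ⊆ Iio d) (hK : (Icc d f ∩ K).Nonempty) : IsSeparatedIccUnion (C ∪ Icc d f) K := by
  obtain ⟨p, u, v, hp, huv, hsep, rfl, hmeet⟩ := hC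
  have hvd : ∀ l, v l < d := fun l => hCd (mem_iUnion.2 ⟨l, right_mem_Icc.2 (huv l)⟩)
  refine ⟨p + 1, Fin.snoc u d, Fin.snoc v f, p.succ_pos, fun l => ?_, fun l l' hll' => ?_,
    by simp [iUnion_fin_add_one_eq_iUnion_castSucc, Function.comp_def], fun l => ?_⟩
  · induction l using Fin.lastCases with
    | last => simpa using nonempty_Icc.1 (hK.mono inter_subset_left)
    | cast l => simpa using huv l
  · induction l' using Fin.lastCases with
    | last =>
      induction l using Fin.lastCases with
      | last => exact absurd hll' (lt_irrefl _)
      | cast l => simpa using hvd l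
    | cast l' =>
      induction l using Fin.lastCases with
      | last => exact absurd hll' (not_lt.2 (Fin.le_last _))
      | cast l => simpa using hsep l l' (by simpa using hll')
  · induction l using Fin.lastCases with
    | last => simpa using hK
    | cast l => simpa using hmeet l

lemma compl_union_Ioo_union_Ioi {X : Set ℝ} {c d f : ℝ} (hX : X ⊆ Iic c) (hcd : c < d)
    (hdf : d ≤ f) : (X ∪ Ioo c d ∪ Ioi f)ᶜ = (X ∪ Ioi c)ᶜ ∪ Icc d f := by
  ext y
  simp only [mem_compl_iff, mem_union, mem_Ioo, mem_Ioi, mem_Icc, not_or, not_and, not_lt]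
  constructor
  · rintro ⟨⟨hyX, hycd⟩, hyf⟩
    rcases le_or_gt y c with hyc | hcy
    · exact Or.inl ⟨hyX, hyc⟩
    · exact Or.inr ⟨hycd hcy, hyf⟩
  · rintro (⟨hyX, hyc⟩ | ⟨hdy, hyf⟩)
    · exact ⟨⟨hyX, fun h => absurd h (not_lt.2 hyc)⟩, by linarith⟩
    · exact ⟨⟨fun h => by linarith [mem_Iic.1 (hX h)], fun _ => hdy⟩, hyf⟩

lemma isSeparatedIccUnion_compl {K : Set ℝ} {A c d : ℕ → ℝ} (hA : Monotone A) (n : ℕ)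
    (hc : ∀ i < n, A i ≤ c i) (hcd : ∀ i < n, c i ≤ d i) (hd : ∀ i < n, d i ≤ A (i + 1))
    (hK : ∀ i ≤ n, A i ∈ K) {e f : ℝ} (he : e ≤ A 0) (hf : A n ≤ f) :
    IsSeparatedIccUnion (Iio e ∪ (⋃ i < n, Ioo (c i) (d i)) ∪ Ioi f)ᶜ K := by
  induction n generalizing f with
  | zero =>
    simpa [compl_union, Ici_inter_Iic] using
      isSeparatedIccUnion_Icc ⟨A 0, ⟨he, hf⟩, hK 0 le_rfl⟩
  | succ n ih =>
    have ih' := fun f (hf : A n ≤ f) => ih (fun i hi => hc i (by omega))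
      (fun i hi => hcd i (by omega)) (fun i hi => hd i (by omega)) (fun i hi => hK i (by omega)) hf
    rw [biUnion_lt_succ, ← union_assoc]
    rcases (hcd n n.lt_succ_self).eq_or_lt with heq | hlt
    · rw [heq, Ioo_self, union_empty]
      exact ih' f ((hA n.le_succ).trans hf)
    have hAc : A n ≤ c n := hc n n.lt_succ_self
    have hX : Iio e ∪ ⋃ i < n, Ioo (c i) (d i) ⊆ Iic (c n) := by
      refine union_subset (fun y hy => ?_) (iUnion₂_subset fun i hi y hy => ?_)
      · exact (mem_Iio.1 hy).le.trans (he.trans ((hA (Nat.zero_le n)).trans hAc))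
      · exact hy.2.le.trans ((hd i (by omega)).trans ((hA (by omega : i + 1 ≤ n)).trans hAc))
    have hdA : d n ≤ A (n + 1) := hd n n.lt_succ_self
    rw [compl_union_Ioo_union_Ioi hX hlt (hdA.trans hf)]
    refine (ih' (c n) hAc).union_Icc (fun y hy => ?_) ⟨A (n + 1), ⟨hdA, hf⟩, hK _ le_rfl⟩
    exact (not_lt.1 fun h => hy (Or.inr h)).trans_lt hlt

lemma ae_mem_msupport (ν : Measure ℝ) : ∀ᵐ x ∂ν, x ∈ msupport ν := by
  rw [ae_iff]
  refine measure_null_of_locally_null _ fun x hx => ?_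
  simp only [msupport, mem_ofPred_eq, not_forall, not_lt, nonpos_iff_eq_zero] at hx
  obtain ⟨U, hU, hU0⟩ := hx
  exact ⟨U, mem_nhdsWithin_of_mem_nhds hU, hU0⟩

lemma convexOn_inv_sq_sub_Ioi (x : ℝ) : ConvexOn ℝ (Ioi x) fun u => ((u - x) ^ 2)⁻¹ := by
  have h := (convexOn_zpow (𝕜 := ℝ) (-2)).translate_right (-x)
  rw [show (fun z => -x + z) ⁻¹' Ioi 0 = Ioi x by ext; simp] at h
  exact h.congr fun u _ => by simp [zpow_neg, sub_eq_neg_add]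

lemma convexOn_inv_sq_sub_Iio (x : ℝ) : ConvexOn ℝ (Iio x) fun u => ((u - x) ^ 2)⁻¹ := by
  have h := (convexOn_inv_sq_sub_Ioi (-x)).comp_linearMap (-LinearMap.id)
  rw [show (-LinearMap.id : ℝ →ₗ[ℝ] ℝ) ⁻¹' Ioi (-x) = Iio x by ext; simp] at h
  exact h.congr fun u _ => by
    simp only [Function.comp_apply, LinearMap.neg_apply, LinearMap.id_apply]; ring

lemma convexOn_inv_sq_sub {s : Set ℝ} (hs : s.OrdConnected) {x : ℝ} (hx : x ∉ s) :
    ConvexOn ℝ s fun u => ((u - x) ^ 2)⁻¹ := by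
  have hside : s ⊆ Iio x ∨ s ⊆ Ioi x := by
    by_contra! h
    simp only [not_subset, mem_Iio, mem_Ioi, not_lt] at h
    obtain ⟨⟨u, hu, hxu⟩, ⟨v, hv, hvx⟩⟩ := h
    exact hx (hs.out hv hu ⟨hvx, hxu⟩)
  rcases hside with h | h
  · exact (convexOn_inv_sq_sub_Iio x).subset h hs.convex
  · exact (convexOn_inv_sq_sub_Ioi x).subset h hs.convex

lemma convexOn_integral {α E : Type*} [MeasurableSpace α] {μ : Measure α} [AddCommMonoid E]
    [Module ℝ E] {s : Set E} {f : E → α → ℝ} (hs : Convex ℝ s)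
    (hf : ∀ᵐ x ∂μ, ConvexOn ℝ s (f · x)) (hint : ∀ w ∈ s, Integrable (f w) μ) :
    ConvexOn ℝ s fun w => ∫ x, f w x ∂μ := by
  refine ⟨hs, fun u hu v hv a b ha hb hab => ?_⟩
  have hu' := (hint u hu).const_mul a
  have hv' := (hint v hv).const_mul b
  calc ∫ x, f (a • u + b • v) x ∂μ ≤ ∫ x, (a * f u x + b * f v x) ∂μ :=
        integral_mono_ae (hint _ (hs hu hv ha hb hab)) (hu'.add hv')
          (hf.mono fun x hx => hx.2 hu hv ha hb hab)
    _ = a • ∫ x, f u x ∂μ + b • ∫ x, f v x ∂μ := by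
        rw [integral_add hu' hv', integral_const_mul, integral_const_mul, smul_eq_mul, smul_eq_mul]

-- The paper's `h`; on the support the integrand need not be integrable and the value is junk.
noncomputable def invSqIntegral (ν : Measure ℝ) (w : ℝ) : ℝ := ∫ x, ((w - x) ^ 2)⁻¹ ∂ν

section InvSqIntegral

variable {ν : Measure ℝ}

lemma inv_sq_le_inv_sq_of_le_abs {ε y : ℝ} (hε : 0 < ε) (h : ε ≤ |y|) : (y ^ 2)⁻¹ ≤ (ε ^ 2)⁻¹ :=
  inv_anti₀ (by positivity) (sq_le_sq.2 (by rwa [abs_of_pos hε]))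

lemma integrable_inv_sq_sub [IsFiniteMeasure ν] {w ε : ℝ} (hε : 0 < ε)
    (h : ∀ᵐ x ∂ν, ε ≤ |w - x|) : Integrable (fun x => ((w - x) ^ 2)⁻¹) ν :=
  (integrable_const (ε ^ 2)⁻¹).mono' (by fun_prop) <| h.mono fun x hx => by
    rw [Real.norm_of_nonneg (by positivity)]
    exact inv_sq_le_inv_sq_of_le_abs hε hx

lemma invSqIntegral_le [IsProbabilityMeasure ν] {w ε : ℝ} (hε : 0 < ε)
    (h : ∀ᵐ x ∂ν, ε ≤ |w - x|) : invSqIntegral ν w ≤ (ε ^ 2)⁻¹ := by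
  simpa [invSqIntegral] using integral_mono_ae (integrable_inv_sq_sub hε h) (integrable_const _)
    (h.mono fun x hx => inv_sq_le_inv_sq_of_le_abs hε hx)

lemma mul_invSqIntegral_lt_one [IsProbabilityMeasure ν] {w c : ℝ} (hc : 0 ≤ c)
    (h : ∀ᵐ x ∂ν, c + 1 ≤ |w - x|) : c * invSqIntegral ν w < 1 := by
  have hε : 0 < c + 1 := by linarith
  calc c * invSqIntegral ν w ≤ c * ((c + 1) ^ 2)⁻¹ :=
        mul_le_mul_of_nonneg_left (invSqIntegral_le hε h) hc
    _ < 1 := by rw [← div_eq_mul_inv, div_lt_one (by positivity)]; nlinarith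

lemma eventually_atTop_mul_invSqIntegral_lt_one [IsProbabilityMeasure ν] {R c : ℝ}
    (hR : ∀ᵐ x ∂ν, x ≤ R) (hc : 0 ≤ c) : ∀ᶠ w in atTop, c * invSqIntegral ν w < 1 := by
  filter_upwards [eventually_ge_atTop (R + (c + 1))] with w hw
  exact mul_invSqIntegral_lt_one hc (hR.mono fun x hx => by
    rw [abs_of_nonneg (by linarith)]; linarith)

lemma eventually_atBot_mul_invSqIntegral_lt_one [IsProbabilityMeasure ν] {R c : ℝ}
    (hR : ∀ᵐ x ∂ν, R ≤ x) (hc : 0 ≤ c) : ∀ᶠ w in atBot, c * invSqIntegral ν w < 1 := by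
  filter_upwards [eventually_le_atBot (R - (c + 1))] with w hw
  exact mul_invSqIntegral_lt_one hc (hR.mono fun x hx => by
    rw [abs_of_nonpos (by linarith)]; linarith)

variable [IsFiniteMeasure ν] {K I : Set ℝ}

lemma integrable_inv_sq_sub_of_notMem (hK : IsClosed K) (hνK : ∀ᵐ x ∂ν, x ∈ K) {w : ℝ}
    (hw : w ∉ K) : Integrable (fun x => ((w - x) ^ 2)⁻¹) ν := by
  obtain ⟨ε, hε, hball⟩ := Metric.isOpen_iff.1 hK.isOpen_compl w hw
  refine integrable_inv_sq_sub hε (hνK.mono fun x hx => ?_)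
  by_contra! h
  exact hball (by rwa [Metric.mem_ball, Real.dist_eq, abs_sub_comm]) hx

lemma convexOn_invSqIntegral (hK : IsClosed K) (hνK : ∀ᵐ x ∂ν, x ∈ K) (hI : I.OrdConnected)
    (hIK : Disjoint I K) : ConvexOn ℝ I (invSqIntegral ν) :=
  convexOn_integral hI.convex
    (hνK.mono fun _ hx => convexOn_inv_sq_sub hI fun hxI => hIK.ne_of_mem hxI hx rfl)
    fun _ hw => integrable_inv_sq_sub_of_notMem hK hνK (hIK.notMem_of_mem_left hw)

lemma isOpen_and_ordConnected_inter_sublevel (hK : IsClosed K) (hνK : ∀ᵐ x ∂ν, x ∈ K)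
    (hIo : IsOpen I) (hI : I.OrdConnected) (hIK : Disjoint I K) {c : ℝ} (hc : 0 ≤ c) :
    IsOpen (I ∩ {w | c * invSqIntegral ν w < 1}) ∧
      (I ∩ {w | c * invSqIntegral ν w < 1}).OrdConnected := by
  have hconv := (convexOn_invSqIntegral hK hνK hI hIK).smul hc
  exact ⟨(hconv.continuousOn hIo).isOpen_inter_preimage hIo isOpen_Iio,
    (hconv.convex_lt 1).ordConnected⟩

end InvSqIntegral

lemma exists_compl_msupport_inter_sublevel_eq (ν : Measure ℝ) [IsProbabilityMeasure ν]
    {A B : ℕ → ℝ} (hA : Monotone A) (hB : Monotone B) {n : ℕ} (hBA : ∀ i < n, B i ≤ A (i + 1))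
    (hsupp : msupport ν = ⋃ i ≤ n, Icc (A i) (B i)) {t : ℝ} (ht : 0 ≤ t) :
    ∃ (e f : ℝ) (c d : ℕ → ℝ), e ≤ A 0 ∧ B n ≤ f ∧
      (∀ i < n, B i ≤ c i ∧ c i ≤ d i ∧ d i ≤ A (i + 1)) ∧
      (msupport ν)ᶜ ∩ {w | t * invSqIntegral ν w < 1} =
        Iio e ∪ (⋃ i < n, Ioo (c i) (d i)) ∪ Ioi f := by
  have hKc : IsClosed (msupport ν) :=
    hsupp ▸ (finite_le_nat n).isClosed_biUnion fun _ _ => isClosed_Icc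
  have hνK := ae_mem_msupport ν
  have hKbdd : ∀ x ∈ msupport ν, A 0 ≤ x ∧ x ≤ B n := fun x hx => by
    obtain ⟨i, hi, hAx, hxB⟩ := mem_iUnion₂.1 (hsupp ▸ hx)
    exact ⟨(hA (Nat.zero_le i)).trans hAx, hxB.trans (hB hi)⟩
  rw [hsupp]
  exact exists_compl_biUnion_Icc_inter_eq hA hB hBA
    (fun I hIo hIc hIK => isOpen_and_ordConnected_inter_sublevel hKc hνK hIo hIc (hsupp ▸ hIK) ht)
    (eventually_atBot_mul_invSqIntegral_lt_one (hνK.mono fun x hx => (hKbdd x hx).1) ht)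
    (eventually_atTop_mul_invSqIntegral_lt_one (hνK.mono fun x hx => (hKbdd x hx).2) ht)

lemma exists_monotone_nat_of_fin {n : ℕ} {a b : Fin (n + 1) → ℝ} (hab : ∀ i, a i ≤ b i)
    (hdisj : ∀ i j, i < j → b i < a j) :
    ∃ A B : ℕ → ℝ, Monotone A ∧ Monotone B ∧ (∀ i, A i ≤ B i) ∧ (∀ i < n, B i ≤ A (i + 1)) ∧
      ⋃ i, Icc (a i) (b i) = ⋃ i ≤ n, Icc (A i) (B i) := by
  have ha : Monotone a := fun i j hij => hij.eq_or_lt.elim (fun h => h ▸ le_rfl)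
    fun h => ((hab i).trans_lt (hdisj i j h)).le
  have hb : Monotone b := fun i j hij => hij.eq_or_lt.elim (fun h => h ▸ le_rfl)
    fun h => ((hdisj i j h).trans_le (hab j)).le
  let clamp : ℕ → Fin (n + 1) := fun i => ⟨min i n, by omega⟩
  have hclamp : Monotone clamp := fun i j hij => Fin.mk_le_mk.2 (min_le_min_right n hij)
  refine ⟨a ∘ clamp, b ∘ clamp, ha.comp hclamp, hb.comp hclamp, fun i => hab _,
    fun i hi => (hdisj _ _ (Fin.mk_lt_mk.2 (by omega))).le, ?_⟩
  ext x
  simp only [mem_iUnion]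
  constructor
  · rintro ⟨i, hx⟩
    refine ⟨i, i.is_le, ?_⟩
    rwa [Function.comp_apply, Function.comp_apply,
      show clamp i = i from Fin.ext (min_eq_left i.is_le)]
  · rintro ⟨i, -, hx⟩
    exact ⟨_, hx⟩

theorem stmt_19_general (ν : Measure ℝ) [IsProbabilityMeasure ν]
    (σ : ℝ)
    (m : ℕ) (hm : 0 < m) (a b : Fin m → ℝ)
    (hab : ∀ i, a i ≤ b i)
    (hdisj : ∀ i j : Fin m, i < j → b i < a j)
    (hsupp : msupport ν = ⋃ i, Set.Icc (a i) (b i)) :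
    ∃ (p : ℕ) (u v : Fin p → ℝ), 0 < p ∧
      (∀ l, u l ≤ v l) ∧
      (∀ l l' : Fin p, l < l' → v l < u l') ∧
      (Set.univ \ {w : ℝ | w ∉ msupport ν ∧
          0 < 1 - σ^2 * ∫ x, ((w - x)^2)⁻¹ ∂ν}
        = ⋃ l, Set.Icc (u l) (v l)) ∧
      (∀ l, (Set.Icc (u l) (v l) ∩ msupport ν).Nonempty) ∧
      msupport ν ⊆ ⋃ l, Set.Icc (u l) (v l) := by
  obtain ⟨n, rfl⟩ : ∃ n, m = n + 1 := ⟨m - 1, by omega⟩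
  obtain ⟨A, B, hA, hB, hAB, hBA, hAB_iUnion⟩ := exists_monotone_nat_of_fin hab hdisj
  rw [hAB_iUnion] at hsupp
  obtain ⟨e, f, c, d, he, hf, hcd, hO⟩ :=
    exists_compl_msupport_inter_sublevel_eq ν hA hB hBA hsupp (sq_nonneg σ)
  obtain ⟨p, u, v, hp, huv, hsep, hC, hmeet⟩ := isSeparatedIccUnion_compl hA n
    (fun i hi => (hAB i).trans (hcd i hi).1) (fun i hi => (hcd i hi).2.1)
    (fun i hi => (hcd i hi).2.2) (K := msupport ν)
    (fun i hi => hsupp ▸ mem_biUnion hi (left_mem_Icc.2 (hAB i))) he ((hAB n).trans hf)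
  rw [← hO] at hC
  have hO₁ : {w | w ∉ msupport ν ∧ 0 < 1 - σ ^ 2 * ∫ x, ((w - x) ^ 2)⁻¹ ∂ν} =
      (msupport ν)ᶜ ∩ {w | σ ^ 2 * invSqIntegral ν w < 1} := by
    ext w
    simp [invSqIntegral, sub_pos]
  refine ⟨p, u, v, hp, huv, hsep, by rw [hO₁, ← compl_eq_univ_sdiff, hC], hmeet, ?_⟩
  exact hC ▸ fun x hx hxO => hxO.1 hx

/-- If the support of `ν` is a finite union of disjoint closed bounded
intervals, then `ℝ ∖ 𝒪₁` is a finite union of disjoint closed bounded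
intervals, each meeting `supp(ν)`, and containing `supp(ν)`. -/
theorem stmt_19 (ν : Measure ℝ) [IsProbabilityMeasure ν]
    (σ : ℝ) (hσ : 0 < σ)
    (m : ℕ) (hm : 0 < m) (a b : Fin m → ℝ)
    (hab : ∀ i, a i ≤ b i)
    (hdisj : ∀ i j : Fin m, i < j → b i < a j)
    (hsupp : msupport ν = ⋃ i, Set.Icc (a i) (b i)) :
    ∃ (p : ℕ) (u v : Fin p → ℝ), 0 < p ∧
      (∀ l, u l ≤ v l) ∧
      (∀ l l' : Fin p, l < l' → v l < u l') ∧
      (Set.univ \ {w : ℝ | w ∉ msupport ν ∧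
          0 < 1 - σ^2 * ∫ x, ((w - x)^2)⁻¹ ∂ν}
        = ⋃ l, Set.Icc (u l) (v l)) ∧
      (∀ l, (Set.Icc (u l) (v l) ∩ msupport ν).Nonempty) ∧
      msupport ν ⊆ ⋃ l, Set.Icc (u l) (v l) :=
  stmt_19_general ν σ m hm a b hab hdisj hsupp
end
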